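/- Let U ≥ N ≥ 1 be integers. The linear program ℙ has a unique optimal solution: if q = (q_1,...,q_U) ∈ ℝ^U is feasible for ℙ and attains the minimal objective value Σ_{ℓ=1}^U q_ℓ·ℓ² = N(N+1)/2, then q_ℓ = 2ℓ/(N(N+1)) for every 1 ≤ ℓ ≤ N and q_ℓ = 0 for every N < ℓ ≤ U. -/

import Mathlib

/-!
Write `t = N(N+1)/2`, `m = N⁻¹ Σ q_ℓ/ℓ` and `w_ℓ = q_ℓ/ℓ`. Feasibility says exactly that
`0 ≤ w_ℓ ≤ m` and `Σ w_ℓ = N m`, and the objective minus `t` is `Σ w_ℓ f(ℓ)` with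
`f(x) = x³ - t x`. Since `Σ_{ℓ ≤ N} f(ℓ) = 0` and `f(ℓ) < N t < f(ℓ')` whenever
`ℓ ≤ N < ℓ'`, the bathtub principle shows that `Σ w_ℓ f(ℓ) ≥ 0`, with equality only when
`w` fills the `N` lowest levels to capacity: `w_ℓ = m` for `ℓ ≤ N` and `w_ℓ = 0` beyond.
Then `Σ q_ℓ = 1` forces `m = 1/t`.
-/

/-- Feasibility for the linear program ℙ: nonnegative coordinates summing to one,
with `q_ℓ ℓ⁻¹ ≤ N⁻¹ Σ_{ℓ'} q_{ℓ'} (ℓ')⁻¹` for every `ℓ ∈ {1,…,U}`. -/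
def Feasible (U N : ℕ) (q : ℕ → ℝ) : Prop :=
  (∀ ℓ ∈ Finset.Icc 1 U, 0 ≤ q ℓ) ∧
  (∑ ℓ ∈ Finset.Icc 1 U, q ℓ = 1) ∧
  (∀ ℓ ∈ Finset.Icc 1 U,
    q ℓ * (ℓ : ℝ)⁻¹ ≤ (N : ℝ)⁻¹ * ∑ ℓ' ∈ Finset.Icc 1 U, q ℓ' * (ℓ' : ℝ)⁻¹)

open Finset

section Bathtub

variable {ι : Type*} [DecidableEq ι] {I L : Finset ι} {w f : ι → ℝ} {m : ℝ}

theorem sum_mul_sub_mul_sum_eq_of_sum_eq (hLI : L ⊆ I) (hw : ∑ i ∈ I, w i = m * #L) (A : ℝ) :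
    ∑ i ∈ I, w i * f i - m * ∑ i ∈ L, f i =
      ∑ i ∈ L, (m - w i) * (A - f i) + ∑ i ∈ I \ L, w i * (f i - A) := by
  have hwf := sum_sdiff hLI (f := fun i ↦ w i * f i)
  have hw' := sum_sdiff hLI (f := w)
  simp only [sub_mul, mul_sub, sum_sub_distrib, ← mul_sum, ← sum_mul, sum_const,
    nsmul_eq_mul]
  linear_combination A * hw' + A * hw - hwf

theorem bathtub_eq_of_sum_mul_le (hLI : L ⊆ I) (hw0 : ∀ i ∈ I, 0 ≤ w i)
    (hwm : ∀ i ∈ I, w i ≤ m) (hw : ∑ i ∈ I, w i = m * #L) {A : ℝ}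
    (hfL : ∀ i ∈ L, f i < A) (hfI : ∀ i ∈ I \ L, A < f i)
    (hle : ∑ i ∈ I, w i * f i ≤ m * ∑ i ∈ L, f i) :
    (∀ i ∈ L, w i = m) ∧ ∀ i ∈ I \ L, w i = 0 := by
  have hL0 : ∀ i ∈ L, 0 ≤ (m - w i) * (A - f i) := fun i hi ↦
    mul_nonneg (sub_nonneg.2 (hwm i (hLI hi))) (sub_pos.2 (hfL i hi)).le
  have hI0 : ∀ i ∈ I \ L, 0 ≤ w i * (f i - A) := fun i hi ↦
    mul_nonneg (hw0 i (sdiff_subset hi)) (sub_pos.2 (hfI i hi)).le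
  have hsum := sum_mul_sub_mul_sum_eq_of_sum_eq (f := f) hLI hw A
  have hL := (sum_eq_zero_iff_of_nonneg hL0).1 (by linarith [sum_nonneg hL0, sum_nonneg hI0])
  have hI := (sum_eq_zero_iff_of_nonneg hI0).1 (by linarith [sum_nonneg hL0, sum_nonneg hI0])
  refine ⟨fun i hi ↦ ?_, fun i hi ↦ ?_⟩
  · have := (mul_eq_zero.1 (hL i hi)).resolve_right (sub_pos.2 (hfL i hi)).ne'
    linarith
  · exact (mul_eq_zero.1 (hI i hi)).resolve_right (sub_pos.2 (hfI i hi)).ne'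

end Bathtub

theorem sum_Icc_id_real (n : ℕ) : ∑ ℓ ∈ Icc 1 n, (ℓ : ℝ) = n * (n + 1) / 2 := by
  induction n with
  | zero => simp
  | succ k ih => rw [sum_Icc_succ_top (by omega), ih]; push_cast; ring

theorem sum_Icc_cube_real (n : ℕ) : ∑ ℓ ∈ Icc 1 n, (ℓ : ℝ) ^ 3 = (n * (n + 1) / 2) ^ 2 := by
  induction n with
  | zero => simp
  | succ k ih => rw [sum_Icc_succ_top (by omega), ih]; push_cast; ring

theorem cube_sub_mul_lt {n x : ℝ} (hx : 0 < x) (hxn : x ≤ n) :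
    x ^ 3 - n * (n + 1) / 2 * x < n * (n * (n + 1) / 2) := by
  have hnx : 0 ≤ n - x := sub_nonneg.2 hxn
  nlinarith [mul_nonneg (mul_nonneg hx.le hnx) (by linarith : 0 ≤ n + x),
    mul_nonneg (sq_nonneg n) hnx, mul_pos (hx.trans_le hxn) hx]

theorem lt_cube_sub_mul {n x : ℝ} (hn : 0 ≤ n) (hx : n + 1 ≤ x) :
    n * (n * (n + 1) / 2) < x ^ 3 - n * (n + 1) / 2 * x := by
  nlinarith [mul_nonneg (sq_nonneg x) (sub_nonneg.2 hx),
    mul_pos (mul_pos (by linarith : 0 < n + 1) (by linarith : 0 < x - n))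
      (by linarith : 0 < 2 * x + n)]

theorem sum_Icc_cube_sub_mul_eq_zero (N : ℕ) :
    ∑ ℓ ∈ Icc 1 N, ((ℓ : ℝ) ^ 3 - N * (N + 1) / 2 * ℓ) = 0 := by
  rw [sum_sub_distrib, ← mul_sum, sum_Icc_cube_real, sum_Icc_id_real]; ring

theorem sum_Icc_mul_inv_mul_cube_sub_mul (U : ℕ) (q : ℕ → ℝ) (t : ℝ) :
    ∑ ℓ ∈ Icc 1 U, q ℓ * (ℓ : ℝ)⁻¹ * ((ℓ : ℝ) ^ 3 - t * ℓ) =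
      ∑ ℓ ∈ Icc 1 U, q ℓ * (ℓ : ℝ) ^ 2 - t * ∑ ℓ ∈ Icc 1 U, q ℓ := by
  rw [mul_sum, ← sum_sub_distrib]
  refine sum_congr rfl fun ℓ hℓ ↦ ?_
  have : (ℓ : ℝ) ≠ 0 := (Nat.cast_pos.2 (mem_Icc.1 hℓ).1).ne'
  field_simp

theorem Feasible.exists_eq_mul_of_objective_eq {U N : ℕ} {q : ℕ → ℝ} (hN : 1 ≤ N)
    (hUN : N ≤ U) (hfeas : Feasible U N q)
    (hopt : ∑ ℓ ∈ Icc 1 U, q ℓ * (ℓ : ℝ) ^ 2 = N * (N + 1) / 2) :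
    ∃ m : ℝ, (∀ ℓ ∈ Icc 1 N, q ℓ = m * ℓ) ∧ ∀ ℓ ∈ Icc 1 U \ Icc 1 N, q ℓ = 0 := by
  obtain ⟨hq0, hq1, hcap⟩ := hfeas
  set t : ℝ := (N : ℝ) * (N + 1) / 2
  set m : ℝ := (N : ℝ)⁻¹ * ∑ ℓ ∈ Icc 1 U, q ℓ * (ℓ : ℝ)⁻¹
  have hN' : (0 : ℝ) < N := by positivity
  have hpos {ℓ : ℕ} (hℓ : ℓ ∈ Icc 1 U) : (0 : ℝ) < ℓ := Nat.cast_pos.2 (mem_Icc.1 hℓ).1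
  have hLI : Icc 1 N ⊆ Icc 1 U := Icc_subset_Icc le_rfl hUN
  have hw : ∑ ℓ ∈ Icc 1 U, q ℓ * (ℓ : ℝ)⁻¹ = m * #(Icc 1 N) := by
    rw [Nat.card_Icc, Nat.add_sub_cancel, mul_comm, ← mul_assoc, mul_inv_cancel₀ hN'.ne', one_mul]
  obtain ⟨hfull, hempty⟩ := bathtub_eq_of_sum_mul_le
    (f := fun ℓ : ℕ ↦ (ℓ : ℝ) ^ 3 - t * ℓ) (A := N * t) hLI
    (fun ℓ hℓ ↦ mul_nonneg (hq0 ℓ hℓ) (inv_pos.2 (hpos hℓ)).le) hcap hw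
    (fun ℓ hℓ ↦ cube_sub_mul_lt (hpos (hLI hℓ)) (by exact_mod_cast (mem_Icc.1 hℓ).2))
    (fun ℓ hℓ ↦ lt_cube_sub_mul hN'.le <| by
      simp only [mem_sdiff, mem_Icc] at hℓ; exact_mod_cast (by omega : N + 1 ≤ ℓ))
    (le_of_eq <| by
      rw [sum_Icc_mul_inv_mul_cube_sub_mul, hopt, hq1, sum_Icc_cube_sub_mul_eq_zero]; ring)
  refine ⟨m, fun ℓ hℓ ↦ ?_, fun ℓ hℓ ↦ ?_⟩
  · rw [← hfull ℓ hℓ, inv_mul_cancel_right₀ (hpos (hLI hℓ)).ne']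
  · exact (mul_eq_zero.1 (hempty ℓ hℓ)).resolve_right (inv_pos.2 (hpos (sdiff_subset hℓ))).ne'

/-- the linear program ℙ has a unique optimal solution: any feasible `q`
attaining the minimal objective value `N(N+1)/2` must equal `q*`, i.e.
`q_ℓ = 2ℓ/(N(N+1))` for `1 ≤ ℓ ≤ N` and `q_ℓ = 0` for `N < ℓ ≤ U`. -/
theorem lp_unique_optimum (U N : ℕ) (hN : 1 ≤ N) (hUN : N ≤ U) (q : ℕ → ℝ)
    (hfeas : Feasible U N q)
    (hopt : ∑ ℓ ∈ Finset.Icc 1 U, q ℓ * (ℓ : ℝ) ^ 2 = (N : ℝ) * ((N : ℝ) + 1) / 2) :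
    (∀ ℓ, 1 ≤ ℓ → ℓ ≤ N → q ℓ = 2 * (ℓ : ℝ) / ((N : ℝ) * ((N : ℝ) + 1))) ∧
    (∀ ℓ, N < ℓ → ℓ ≤ U → q ℓ = 0) := by
  obtain ⟨m, hqL, hqI⟩ := hfeas.exists_eq_mul_of_objective_eq hN hUN hopt
  have hmem {ℓ : ℕ} : ℓ ∈ Icc 1 U \ Icc 1 N ↔ N < ℓ ∧ ℓ ≤ U := by
    simp only [mem_sdiff, mem_Icc]; omega
  have hm : m * (N * (N + 1) / 2) = 1 := by
    have hsum := hfeas.2.1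
    rwa [← sum_sdiff (Icc_subset_Icc le_rfl hUN), sum_eq_zero hqI, zero_add,
      sum_congr rfl hqL, ← mul_sum, sum_Icc_id_real] at hsum
  refine ⟨fun ℓ h1 h2 ↦ ?_, fun ℓ h1 h2 ↦ hqI ℓ (hmem.2 ⟨h1, h2⟩)⟩
  rw [hqL ℓ (mem_Icc.2 ⟨h1, h2⟩), eq_inv_of_mul_eq_one_left hm]
  field_simp
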